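/- arXiv:1001.0458 — 9 statements merged into one kernel-verified Lean document; each statement's English description precedes it below -/
import Mathlib

section
/- Let T, N, B₁, B₂ : ℝ → ℝ⁴ be a Frenet frame of a partially null curve in Minkowski 4-space E₁⁴ (with metric g = -dx₁² + dx₂² + dx₃² + dx₄²), satisfying the Frenet equations T' = κN, N' = -κT + τB₁, B₁' = 0, B₂' = -τN, where κ, τ : ℝ → ℝ are smooth with κ(s) ≠ 0 for all s. Then there exists a constant vector U with U not parallel to B₁ and g(T(s), U) constant if and only if τ/κ is a constant function. -/
noncomputable def g (v w : Fin 4 → ℝ) : ℝ :=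
  -(v 0 * w 0) + v 1 * w 1 + v 2 * w 2 + v 3 * w 3


lemma hasDerivAt_g {v w : ℝ → Fin 4 → ℝ} {v' w' : Fin 4 → ℝ} {s : ℝ}
    (hv : HasDerivAt v v' s) (hw : HasDerivAt w w' s) :
    HasDerivAt (fun t => g (v t) (w t)) (g v' (w s) + g (v s) w') s := by
  have hvi : ∀ i, HasDerivAt (fun t => v t i) (v' i) s := fun i => (hasDerivAt_pi.mp hv) i
  have hwi : ∀ i, HasDerivAt (fun t => w t i) (w' i) s := fun i => (hasDerivAt_pi.mp hw) i
  have h1 : HasDerivAt (fun t => -(v t 0 * w t 0) + v t 1 * w t 1 + v t 2 * w t 2 + v t 3 * w t 3)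
      (-(v' 0 * w s 0 + v s 0 * w' 0) + (v' 1 * w s 1 + v s 1 * w' 1)
        + (v' 2 * w s 2 + v s 2 * w' 2) + (v' 3 * w s 3 + v s 3 * w' 3)) s :=
    ((((hvi 0).mul (hwi 0)).neg.add ((hvi 1).mul (hwi 1))).add
      ((hvi 2).mul (hwi 2))).add ((hvi 3).mul (hwi 3))
  have h2 : g v' (w s) + g (v s) w' =
      -(v' 0 * w s 0 + v s 0 * w' 0) + (v' 1 * w s 1 + v s 1 * w' 1)
        + (v' 2 * w s 2 + v s 2 * w' 2) + (v' 3 * w s 3 + v s 3 * w' 3) := by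
    simp [g]; ring
  rw [show (fun t => g (v t) (w t)) =
      (fun t => -(v t 0 * w t 0) + v t 1 * w t 1 + v t 2 * w t 2 + v t 3 * w t 3) from rfl, h2]
  exact h1

lemma const_of_deriv_zero {E : Type*} [NormedAddCommGroup E] [NormedSpace ℝ E]
    {f : ℝ → E} (h : ∀ s, HasDerivAt f 0 s) (s : ℝ) : f s = f 0 := by
  apply is_const_of_fderiv_eq_zero (fun t => (h t).differentiableAt)
  intro t
  have := (h t).hasFDerivAt.fderiv
  rw [this]; ext v; simp

lemma g_right (v : Fin 4 → ℝ) (a b c d : ℝ) (w1 w2 w3 w4 : Fin 4 → ℝ) :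
    g v (a • w1 + b • w2 + c • w3 + d • w4)
      = a * g v w1 + b * g v w2 + c * g v w3 + d * g v w4 := by
  simp [g, Pi.add_apply, Pi.smul_apply, smul_eq_mul]; ring

lemma g_left (V : Fin 4 → ℝ) (a b c d : ℝ) (w1 w2 w3 w4 : Fin 4 → ℝ) :
    g (a • w1 + b • w2 + c • w3 + d • w4) V
      = a * g w1 V + b * g w2 V + c * g w3 V + d * g w4 V := by
  simp [g, Pi.add_apply, Pi.smul_apply, smul_eq_mul]; ring

lemma nondeg (T0 N0 B10 B20 V : Fin 4 → ℝ)
    (hTT : g T0 T0 = 1) (hNN : g N0 N0 = 1) (hB₁B₁ : g B10 B10 = 0)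
    (hB₂B₂ : g B20 B20 = 0) (hB₁B₂ : g B10 B20 = 1) (hTN : g T0 N0 = 0)
    (hTB₁ : g T0 B10 = 0) (hTB₂ : g T0 B20 = 0) (hNB₁ : g N0 B10 = 0)
    (hNB₂ : g N0 B20 = 0)
    (h1 : g T0 V = 0) (h2 : g N0 V = 0) (h3 : g B10 V = 0) (h4 : g B20 V = 0) :
    V = 0 := by
  set v : Fin 4 → (Fin 4 → ℝ) := ![T0, N0, B10, B20] with hv
  have hexp : ∀ c : Fin 4 → ℝ, ∑ i, c i • v i
      = c 0 • T0 + c 1 • N0 + c 2 • B10 + c 3 • B20 := by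
    intro c; rw [Fin.sum_univ_four]; simp [hv]
  have li : LinearIndependent ℝ v := by
    rw [Fintype.linearIndependent_iff]
    intro c hc
    rw [hexp] at hc
    have e1 := congrArg (fun w => g T0 w) hc
    have e2 := congrArg (fun w => g N0 w) hc
    have e3 := congrArg (fun w => g B20 w) hc
    have e4 := congrArg (fun w => g B10 w) hc
    simp only [g_right] at e1 e2 e3 e4
    have gz : ∀ w : Fin 4 → ℝ, g w 0 = 0 := by intro w; simp [g]
    rw [gz, hTT, hTN, hTB₁, hTB₂] at e1
    rw [gz, hNN] at e2
    rw [gz] at e3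
    rw [gz, hB₁B₁, hB₁B₂] at e4
    have sTN : g N0 T0 = 0 := by rw [show g N0 T0 = g T0 N0 from by simp [g]; ring, hTN]
    have sTB2 : g B20 T0 = 0 := by rw [show g B20 T0 = g T0 B20 from by simp [g]; ring, hTB₂]
    have sNB2 : g B20 N0 = 0 := by rw [show g B20 N0 = g N0 B20 from by simp [g]; ring, hNB₂]
    have sB1B2 : g B20 B10 = 1 := by rw [show g B20 B10 = g B10 B20 from by simp [g]; ring, hB₁B₂]
    have sNB1 : g B10 N0 = 0 := by rw [show g B10 N0 = g N0 B10 from by simp [g]; ring, hNB₁]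
    have sTB1 : g B10 T0 = 0 := by rw [show g B10 T0 = g T0 B10 from by simp [g]; ring, hTB₁]
    rw [sTN, hNB₁, hNB₂] at e2
    rw [sTB2, sNB2, sB1B2, hB₂B₂] at e3
    rw [sTB1, sNB1] at e4
    intro i
    fin_cases i <;> simp <;> linarith
  have hcard : Fintype.card (Fin 4) = Module.finrank ℝ (Fin 4 → ℝ) := by simp
  have hspan : Submodule.span ℝ (Set.range v) = ⊤ := by
    have := (basisOfLinearIndependentOfCardEqFinrank li hcard).span_eq
    rwa [coe_basisOfLinearIndependentOfCardEqFinrank] at this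
  have key : ∀ w : Fin 4 → ℝ, g w V = 0 := by
    intro w
    have hw : w ∈ Submodule.span ℝ (Set.range v) := by rw [hspan]; trivial
    rw [Submodule.mem_span_range_iff_exists_fun] at hw
    obtain ⟨c, hc⟩ := hw
    rw [hexp] at hc
    rw [← hc, g_left, h1, h2, h3, h4]; ring
  funext i
  fin_cases i
  · have := key ![-1,0,0,0]; simp [g] at this; simpa using this
  · have := key ![0,1,0,0]; simp [g] at this; simpa using this
  · have := key ![0,0,1,0]; simp [g] at this; simpa using this
  · have := key ![0,0,0,1]; simp [g] at this; simpa using this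

lemma g_comm (v w : Fin 4 → ℝ) : g v w = g w v := by simp [g]; ring

lemma g_zero (v : Fin 4 → ℝ) : g v 0 = 0 := by simp [g]

lemma g_smul_left (r : ℝ) (v w : Fin 4 → ℝ) : g (r • v) w = r * g v w := by
  simp [g, Pi.smul_apply, smul_eq_mul]; ring

lemma g_add_smul (x : Fin 4 → ℝ) (r : ℝ) (w u : Fin 4 → ℝ) :
    g x (r • w + u) = r * g x w + g x u := by
  simp [g, Pi.add_apply, Pi.smul_apply, smul_eq_mul]; ring

lemma g_sub_smul (x : Fin 4 → ℝ) (u : Fin 4 → ℝ) (r : ℝ) (w : Fin 4 → ℝ) :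
    g x (u - r • w) = g x u - r * g x w := by
  simp [g, Pi.sub_apply, Pi.smul_apply, smul_eq_mul]; ring

lemma g_two_smul_left (a b : ℝ) (x y u : Fin 4 → ℝ) :
    g (a • x + b • y) u = a * g x u + b * g y u := by
  simp [g, Pi.add_apply, Pi.smul_apply, smul_eq_mul]; ring

theorem stmt0
    (T N B₁ B₂ : ℝ → Fin 4 → ℝ) (κ τ : ℝ → ℝ)
    (hκ : ContDiff ℝ (⊤ : ℕ∞) κ) (hτ : ContDiff ℝ (⊤ : ℕ∞) τ)
    (hκ0 : ∀ s, κ s ≠ 0) (hτ0 : ∀ s, τ s ≠ 0)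
    (hT : ∀ s, HasDerivAt T (κ s • N s) s)
    (hN : ∀ s, HasDerivAt N ((-κ s) • T s + τ s • B₁ s) s)
    (hB₁ : ∀ s, HasDerivAt B₁ (0 : Fin 4 → ℝ) s)
    (hB₂ : ∀ s, HasDerivAt B₂ ((-τ s) • N s) s)
    (hTT : ∀ s, g (T s) (T s) = 1) (hNN : ∀ s, g (N s) (N s) = 1)
    (hB₁B₁ : ∀ s, g (B₁ s) (B₁ s) = 0) (hB₂B₂ : ∀ s, g (B₂ s) (B₂ s) = 0)
    (hB₁B₂ : ∀ s, g (B₁ s) (B₂ s) = 1)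
    (hTN : ∀ s, g (T s) (N s) = 0) (hTB₁ : ∀ s, g (T s) (B₁ s) = 0)
    (hTB₂ : ∀ s, g (T s) (B₂ s) = 0) (hNB₁ : ∀ s, g (N s) (B₁ s) = 0)
    (hNB₂ : ∀ s, g (N s) (B₂ s) = 0)
    :
    (∃ U : Fin 4 → ℝ, U ≠ 0 ∧ (∀ r : ℝ, U ≠ r • B₁ 0) ∧
      ∃ a : ℝ, ∀ s, g (T s) U = a) ↔
    (∃ C : ℝ, ∀ s, τ s / κ s = C) := by
  constructor
  · rintro ⟨U, hU0, hUpar, a, ha⟩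
    have hB₁const : ∀ s, B₁ s = B₁ 0 := const_of_deriv_zero hB₁
    have hNU : ∀ s, g (N s) U = 0 := by
      intro s
      have hd : HasDerivAt (fun t => g (T t) U) (g (κ s • N s) U + g (T s) (0 : Fin 4 → ℝ)) s :=
        hasDerivAt_g (hT s) (hasDerivAt_const s U)
      have hc : HasDerivAt (fun t => g (T t) U) 0 s := by
        have hfa : (fun t => g (T t) U) = fun _ => a := funext ha
        rw [hfa]; exact hasDerivAt_const s a
      have huniq := hd.unique hc
      rw [g_zero, g_smul_left] at huniq
      have := mul_eq_zero.mp (by linarith : κ s * g (N s) U = 0)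
      tauto
    have hEq : ∀ s, τ s * g (B₁ 0) U = κ s * a := by
      intro s
      have hd : HasDerivAt (fun t => g (N t) U)
          (g ((-κ s) • T s + τ s • B₁ s) U + g (N s) (0 : Fin 4 → ℝ)) s :=
        hasDerivAt_g (hN s) (hasDerivAt_const s U)
      have hc : HasDerivAt (fun t => g (N t) U) 0 s := by
        have hf0 : (fun t => g (N t) U) = fun _ => (0 : ℝ) := funext hNU
        rw [hf0]; exact hasDerivAt_const s (0 : ℝ)
      have huniq := hd.unique hc
      rw [g_zero, g_two_smul_left, ha s, hB₁const s] at huniq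
      linarith
    set c := g (B₁ 0) U with hcdef
    by_cases hc : c = 0
    · exfalso
      have ha0 : a = 0 := by
        have := hEq 0
        rw [hc, mul_zero] at this
        rcases mul_eq_zero.mp this.symm with h | h
        · exact absurd h (hκ0 0)
        · exact h
      set r := g (B₂ 0) U with hrdef
      have hV : U - r • B₁ 0 = 0 := by
        apply nondeg (T 0) (N 0) (B₁ 0) (B₂ 0) _ (hTT 0) (hNN 0) (hB₁B₁ 0) (hB₂B₂ 0)
          (hB₁B₂ 0) (hTN 0) (hTB₁ 0) (hTB₂ 0) (hNB₁ 0) (hNB₂ 0)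
        · rw [g_sub_smul, ha 0, ha0, hTB₁ 0]; ring
        · rw [g_sub_smul, hNU 0, hNB₁ 0]; ring
        · rw [g_sub_smul, ← hcdef, hc, hB₁B₁ 0]; ring
        · rw [g_sub_smul, ← hrdef, g_comm (B₂ 0) (B₁ 0), hB₁B₂ 0]; ring
      exact hUpar r (by rw [← sub_eq_zero]; exact hV)
    · refine ⟨a / c, fun s => ?_⟩
      rw [div_eq_div_iff (hκ0 s) hc]
      have := hEq s
      linarith
  · rintro ⟨C, hC⟩
    have hτκ : ∀ s, τ s = C * κ s := fun s => (div_eq_iff (hκ0 s)).mp (hC s)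
    set F : ℝ → Fin 4 → ℝ := fun s => C • T s + B₂ s with hFdef
    have hF : ∀ s, HasDerivAt F 0 s := by
      intro s
      have h := ((hT s).const_smul C).add (hB₂ s)
      have heq : C • (κ s • N s) + (-τ s) • N s = (0 : Fin 4 → ℝ) := by
        funext i
        simp [Pi.add_apply, Pi.smul_apply, smul_eq_mul, hτκ s]
        ring
      rw [heq] at h
      exact h
    have hFc : ∀ s, F s = F 0 := const_of_deriv_zero hF
    refine ⟨F 0, ?_, ?_, C, ?_⟩
    · intro h0
      have h1 : g (B₁ 0) (F 0) = 1 := by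
        rw [hFdef]
        simp only []
        rw [g_add_smul, g_comm (B₁ 0) (T 0), hTB₁ 0, hB₁B₂ 0]; ring
      rw [h0, g_zero] at h1
      norm_num at h1
    · intro r hr
      have h1 : g (B₁ 0) (F 0) = 1 := by
        rw [hFdef]
        simp only []
        rw [g_add_smul, g_comm (B₁ 0) (T 0), hTB₁ 0, hB₁B₂ 0]; ring
      rw [hr] at h1
      rw [show g (B₁ 0) (r • B₁ 0) = r * g (B₁ 0) (B₁ 0) from by
        rw [g_comm, g_smul_left, g_comm], hB₁B₁ 0] at h1
      norm_num at h1
    · intro s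
      rw [← hFc s, hFdef]
      simp only []
      rw [g_add_smul, hTT s, hTB₂ s]; ring
end

section
/- Let T, N, B₁, B₂ : ℝ → ℝ⁴ be a Frenet frame of a partially null curve in E₁⁴ satisfying T' = κN, N' = -κT + τB₁, B₁' = 0, B₂' = -τN, with κ, τ smooth and nowhere zero, and suppose τ/κ is constant. Then the vector U(s) = (τ/κ)·T(s) + B₂(s) is constant (U' = 0), and g(V, U) is constant for each V ∈ {T, N, B₁, B₂}; in particular the curve is simultaneously a k-type slant helix for k = 0, 1, 2, 3. -/
theorem stmt1
    (T N B₁ B₂ : ℝ → Fin 4 → ℝ) (κ τ : ℝ → ℝ)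
    (hκ : ContDiff ℝ (⊤ : ℕ∞) κ) (hτ : ContDiff ℝ (⊤ : ℕ∞) τ)
    (hκ0 : ∀ s, κ s ≠ 0) (hτ0 : ∀ s, τ s ≠ 0)
    (hT : ∀ s, HasDerivAt T (κ s • N s) s)
    (hN : ∀ s, HasDerivAt N ((-κ s) • T s + τ s • B₁ s) s)
    (hB₁ : ∀ s, HasDerivAt B₁ (0 : Fin 4 → ℝ) s)
    (hB₂ : ∀ s, HasDerivAt B₂ ((-τ s) • N s) s)
    (hTT : ∀ s, g (T s) (T s) = 1) (hNN : ∀ s, g (N s) (N s) = 1)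
    (hB₁B₁ : ∀ s, g (B₁ s) (B₁ s) = 0) (hB₂B₂ : ∀ s, g (B₂ s) (B₂ s) = 0)
    (hB₁B₂ : ∀ s, g (B₁ s) (B₂ s) = 1)
    (hTN : ∀ s, g (T s) (N s) = 0) (hTB₁ : ∀ s, g (T s) (B₁ s) = 0)
    (hTB₂ : ∀ s, g (T s) (B₂ s) = 0) (hNB₁ : ∀ s, g (N s) (B₁ s) = 0)
    (hNB₂ : ∀ s, g (N s) (B₂ s) = 0)
    (C : ℝ) (hC : ∀ s, τ s / κ s = C) :
    (∀ s, HasDerivAt (fun r => (τ r / κ r) • T r + B₂ r) (0 : Fin 4 → ℝ) s) ∧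
    (∃ c₀ : ℝ, ∀ s, g (T s) ((τ s / κ s) • T s + B₂ s) = c₀) ∧
    (∃ c₁ : ℝ, ∀ s, g (N s) ((τ s / κ s) • T s + B₂ s) = c₁) ∧
    (∃ c₂ : ℝ, ∀ s, g (B₁ s) ((τ s / κ s) • T s + B₂ s) = c₂) ∧
    (∃ c₃ : ℝ, ∀ s, g (B₂ s) ((τ s / κ s) • T s + B₂ s) = c₃) := by

  have key : ∀ s, τ s = C * κ s := by
    intro s
    have := hC s
    rw [div_eq_iff (hκ0 s)] at this
    linarith
  constructor
  · intro s
    have hfun : (fun r => (τ r / κ r) • T r + B₂ r) = fun r => C • T r + B₂ r := by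
      funext r; rw [hC r]
    rw [hfun]
    have h1 : HasDerivAt (fun r => C • T r) (C • (κ s • N s)) s := (hT s).const_smul C
    have h2 := (h1.add (hB₂ s))
    refine h2.congr_deriv ?_
    funext i
    simp [Pi.add_apply, key s]
    ring
  refine ⟨⟨C, fun s => ?_⟩, ⟨0, fun s => ?_⟩, ⟨1, fun s => ?_⟩, ⟨0, fun s => ?_⟩⟩ <;>
    simp only [g, Pi.add_apply, Pi.smul_apply, smul_eq_mul, hC] <;>
    [ (have a := hTT s; have b := hTB₂ s);
      (have a := hTN s; have b := hNB₂ s);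
      (have a := hTB₁ s; have b := hB₁B₂ s);
      (have a := hTB₂ s; have b := hB₂B₂ s)] <;>
    simp only [g] at a b <;> linear_combination C * a + b
end

section
/- Let T, N, B₁, B₂ : ℝ → ℝ⁴ be a Frenet frame of a partially null curve in E₁⁴ with Frenet equations T' = κN, N' = -κT + τB₁, B₁' = 0, B₂' = -τN (κ, τ nowhere zero). Then the curve is a 0-type slant helix (with axis not parallel to B₁) if and only if it is a 3-type slant helix (with axis not parallel to B₁). -/
lemma hasDerivAt_g_left {X : ℝ → Fin 4 → ℝ} {X' U : Fin 4 → ℝ} {s : ℝ}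
    (h : HasDerivAt X X' s) :
    HasDerivAt (fun t => g (X t) U) (g X' U) s := by
  have hi := hasDerivAt_pi.mp h
  exact ((((hi 0).mul_const (U 0)).neg.add ((hi 1).mul_const (U 1))).add
    ((hi 2).mul_const (U 2))).add ((hi 3).mul_const (U 3))

lemma g_smul (c : ℝ) (v u : Fin 4 → ℝ) : g (c • v) u = c * g v u := by
  simp [g]; ring

theorem stmt6
    (T N B₁ B₂ : ℝ → Fin 4 → ℝ) (κ τ : ℝ → ℝ)
    (hκ : ContDiff ℝ (⊤ : ℕ∞) κ) (hτ : ContDiff ℝ (⊤ : ℕ∞) τ)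
    (hκ0 : ∀ s, κ s ≠ 0) (hτ0 : ∀ s, τ s ≠ 0)
    (hT : ∀ s, HasDerivAt T (κ s • N s) s)
    (hN : ∀ s, HasDerivAt N ((-κ s) • T s + τ s • B₁ s) s)
    (hB₁ : ∀ s, HasDerivAt B₁ (0 : Fin 4 → ℝ) s)
    (hB₂ : ∀ s, HasDerivAt B₂ ((-τ s) • N s) s)
    (hTT : ∀ s, g (T s) (T s) = 1) (hNN : ∀ s, g (N s) (N s) = 1)
    (hB₁B₁ : ∀ s, g (B₁ s) (B₁ s) = 0) (hB₂B₂ : ∀ s, g (B₂ s) (B₂ s) = 0)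
    (hB₁B₂ : ∀ s, g (B₁ s) (B₂ s) = 1)
    (hTN : ∀ s, g (T s) (N s) = 0) (hTB₁ : ∀ s, g (T s) (B₁ s) = 0)
    (hTB₂ : ∀ s, g (T s) (B₂ s) = 0) (hNB₁ : ∀ s, g (N s) (B₁ s) = 0)
    (hNB₂ : ∀ s, g (N s) (B₂ s) = 0)
    :
    (∃ U : Fin 4 → ℝ, U ≠ 0 ∧ (∀ r : ℝ, U ≠ r • B₁ 0) ∧
      ∃ a : ℝ, ∀ s, g (T s) U = a) ↔
    (∃ U : Fin 4 → ℝ, U ≠ 0 ∧ (∀ r : ℝ, U ≠ r • B₁ 0) ∧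
      ∃ a : ℝ, ∀ s, g (B₂ s) U = a) := by
  constructor
  · rintro ⟨U, hU0, hUB, a, ha⟩
    refine ⟨U, hU0, hUB, g (B₂ 0) U, ?_⟩
    -- g(N s, U) = 0 for all s
    have hNU : ∀ s, g (N s) U = 0 := by
      intro s
      have h1 : HasDerivAt (fun t => g (T t) U) (g (κ s • N s) U) s :=
        hasDerivAt_g_left (hT s)
      have h2 : HasDerivAt (fun t => g (T t) U) 0 s := by
        have : (fun t => g (T t) U) = fun _ : ℝ => a := funext ha
        rw [this]; exact hasDerivAt_const s a
      have := h1.unique h2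
      rw [g_smul] at this
      exact (mul_eq_zero.mp this).resolve_left (hκ0 s)
    intro s
    have hderiv : ∀ t, HasDerivAt (fun u => g (B₂ u) U) 0 t := by
      intro t
      have h1 : HasDerivAt (fun u => g (B₂ u) U) (g ((-τ t) • N t) U) t :=
        hasDerivAt_g_left (hB₂ t)
      rwa [g_smul, hNU, mul_zero] at h1
    exact is_const_of_deriv_eq_zero (fun t => (hderiv t).differentiableAt)
      (fun t => (hderiv t).deriv) s 0
  · rintro ⟨U, hU0, hUB, a, ha⟩
    refine ⟨U, hU0, hUB, g (T 0) U, ?_⟩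
    have hNU : ∀ s, g (N s) U = 0 := by
      intro s
      have h1 : HasDerivAt (fun t => g (B₂ t) U) (g ((-τ s) • N s) U) s :=
        hasDerivAt_g_left (hB₂ s)
      have h2 : HasDerivAt (fun t => g (B₂ t) U) 0 s := by
        have : (fun t => g (B₂ t) U) = fun _ : ℝ => a := funext ha
        rw [this]; exact hasDerivAt_const s a
      have := h1.unique h2
      rw [g_smul] at this
      have := (mul_eq_zero.mp this).resolve_left (neg_ne_zero.mpr (hτ0 s))
      exact this
    intro s
    have hderiv : ∀ t, HasDerivAt (fun u => g (T u) U) 0 t := by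
      intro t
      have h1 : HasDerivAt (fun u => g (T u) U) (g (κ t • N t) U) t :=
        hasDerivAt_g_left (hT t)
      rwa [g_smul, hNU, mul_zero] at h1
    exact is_const_of_deriv_eq_zero (fun t => (hderiv t).differentiableAt)
      (fun t => (hderiv t).deriv) s 0
end

section
/- Let T, N, B₁, B₂ : ℝ → ℝ⁴ be a Frenet frame of a pseudo null curve in E₁⁴ satisfying T' = N, N' = τB₁, B₁' = σN − τB₂, B₂' = −T − σB₁, with σ, τ smooth, τ nowhere zero, and suppose σ(s)/τ(s) = −s²/2 + as + b for constants a, b. Then the vector field U(s) = −(σ/τ)'(s)·T(s) + (σ/τ)(s)·N(s) + B₂(s) satisfies U' = 0, g(N, U) = 1, and g(B₁, U) = 0; in particular the curve is both a 1-type and a 2-type slant helix. -/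
lemma g_lin (v x_ y_ : Fin 4 → ℝ) (x y : ℝ) (w : Fin 4 → ℝ) :
    g v (x • x_ + y • y_ + w) = x * g v x_ + y * g v y_ + g v w := by
  simp [g, Pi.add_apply, Pi.smul_apply, smul_eq_mul]; ring

theorem stmt11
    (T N B₁ B₂ : ℝ → Fin 4 → ℝ) (σ τ : ℝ → ℝ)
    (hσ : ContDiff ℝ (⊤ : ℕ∞) σ) (hτ : ContDiff ℝ (⊤ : ℕ∞) τ)
    (hτ0 : ∀ s, τ s ≠ 0)
    (hT : ∀ s, HasDerivAt T (N s) s)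
    (hN : ∀ s, HasDerivAt N (τ s • B₁ s) s)
    (hB₁ : ∀ s, HasDerivAt B₁ (σ s • N s - τ s • B₂ s) s)
    (hB₂ : ∀ s, HasDerivAt B₂ (-T s - σ s • B₁ s) s)
    (hTT : ∀ s, g (T s) (T s) = 1) (hB₁B₁ : ∀ s, g (B₁ s) (B₁ s) = 1)
    (hNN : ∀ s, g (N s) (N s) = 0) (hB₂B₂ : ∀ s, g (B₂ s) (B₂ s) = 0)
    (hNB₂ : ∀ s, g (N s) (B₂ s) = 1)
    (hTN : ∀ s, g (T s) (N s) = 0) (hTB₁ : ∀ s, g (T s) (B₁ s) = 0)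
    (hTB₂ : ∀ s, g (T s) (B₂ s) = 0) (hNB₁ : ∀ s, g (N s) (B₁ s) = 0)
    (hB₁B₂ : ∀ s, g (B₁ s) (B₂ s) = 0)
    (a b : ℝ) (hab : ∀ s, σ s / τ s = -(s ^ 2 / 2) + a * s + b) :
    (∀ s, HasDerivAt (fun r =>
      (-(deriv (fun p => σ p / τ p) r)) • T r + (σ r / τ r) • N r + B₂ r)
      (0 : Fin 4 → ℝ) s) ∧
    (∀ s, g (N s) ((-(deriv (fun p => σ p / τ p) s)) • T s + (σ s / τ s) • N s + B₂ s) = 1) ∧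
    (∀ s, g (B₁ s) ((-(deriv (fun p => σ p / τ p) s)) • T s + (σ s / τ s) • N s + B₂ s) = 0) := by
  have hq : (fun p => σ p / τ p) = fun p : ℝ => -(p ^ 2 / 2) + a * p + b := funext hab
  have hd : ∀ r : ℝ, HasDerivAt (fun p => σ p / τ p) (-r + a) r := by
    intro r
    rw [hq]
    have h := (((hasDerivAt_pow 2 r).div_const 2).neg.add ((hasDerivAt_id r).const_mul a)).add_const b
    refine h.congr_deriv ?_
    simp
  have hdval : ∀ r : ℝ, deriv (fun p => σ p / τ p) r = -r + a := fun r => (hd r).deriv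
  refine ⟨?_, ?_, ?_⟩
  · intro s
    have hfun : (fun r =>
        (-(deriv (fun p => σ p / τ p) r)) • T r + (σ r / τ r) • N r + B₂ r)
        = fun r => (r - a) • T r + (σ r / τ r) • N r + B₂ r := by
      funext r; rw [hdval r]; ring_nf
    rw [hfun]
    have h1 := (((hasDerivAt_id s).sub_const a).smul (hT s))
    have h2 := ((hd s).smul (hN s))
    have h := (h1.add h2).add (hB₂ s)
    refine h.congr_deriv ?_
    rw [smul_smul, div_mul_cancel₀ _ (hτ0 s)]
    simp only [id_eq]
    module
  · intro s
    rw [show (-(deriv (fun p => σ p / τ p) s)) • T s + (σ s / τ s) • N s + B₂ s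
        = (-(deriv (fun p => σ p / τ p) s)) • T s + (σ s / τ s) • N s + B₂ s from rfl,
      g_lin]
    have h1 : g (N s) (T s) = 0 := by
      have := hTN s; simpa [g] using by
        have h' := hTN s
        simp [g] at h'
        linarith [h']
    rw [hNN s, hNB₂ s]
    rw [h1]; ring
  · intro s
    rw [g_lin]
    have h1 : g (B₁ s) (T s) = 0 := by
      have h' := hTB₁ s; simp [g] at h' ⊢; linarith
    have h2 : g (B₁ s) (N s) = 0 := by
      have h' := hNB₁ s; simp [g] at h' ⊢; linarith
    rw [h1, h2, hB₁B₂ s]; ring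
end

section
/- Let T, N, B₁, B₂ : ℝ → ℝ⁴ be a Frenet frame of a pseudo null curve in E₁⁴ satisfying T' = N, N' = τB₁, B₁' = σN − τB₂, B₂' = −T − σB₁, with σ, τ smooth and τ nowhere zero. If a constant vector U decomposes as U = u₁T + u₂N + cB₁ + u₄B₂ with c a nonzero constant, then the coefficients satisfy u₁' = u₄, u₂' = −u₁ − cσ, τu₂ = σu₄, and u₄' = cτ; consequently u₄ = c∫τ ds, u₂ = c(σ/τ)∫τ ds, u₁ = −c[σ + d/ds((σ/τ)∫τ ds)], and the compatibility condition ∫τ ds + d/ds[σ + d/ds((σ/τ)∫τ ds)] = 0 holds. -/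
theorem stmt12
    (T N B₁ B₂ : ℝ → Fin 4 → ℝ) (σ τ : ℝ → ℝ)
    (hσ : ContDiff ℝ (⊤ : ℕ∞) σ) (hτ : ContDiff ℝ (⊤ : ℕ∞) τ)
    (hτ0 : ∀ s, τ s ≠ 0)
    (hT : ∀ s, HasDerivAt T (N s) s)
    (hN : ∀ s, HasDerivAt N (τ s • B₁ s) s)
    (hB₁ : ∀ s, HasDerivAt B₁ (σ s • N s - τ s • B₂ s) s)
    (hB₂ : ∀ s, HasDerivAt B₂ (-T s - σ s • B₁ s) s)
    (hTT : ∀ s, g (T s) (T s) = 1) (hB₁B₁ : ∀ s, g (B₁ s) (B₁ s) = 1)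
    (hNN : ∀ s, g (N s) (N s) = 0) (hB₂B₂ : ∀ s, g (B₂ s) (B₂ s) = 0)
    (hNB₂ : ∀ s, g (N s) (B₂ s) = 1)
    (hTN : ∀ s, g (T s) (N s) = 0) (hTB₁ : ∀ s, g (T s) (B₁ s) = 0)
    (hTB₂ : ∀ s, g (T s) (B₂ s) = 0) (hNB₁ : ∀ s, g (N s) (B₁ s) = 0)
    (hB₁B₂ : ∀ s, g (B₁ s) (B₂ s) = 0)
    (U : Fin 4 → ℝ) (u₁ u₂ u₄ u₁' u₂' u₄' : ℝ → ℝ) (c : ℝ) (hc : c ≠ 0)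
    (hu₁ : ∀ s, HasDerivAt u₁ (u₁' s) s)
    (hu₂ : ∀ s, HasDerivAt u₂ (u₂' s) s)
    (hu₄ : ∀ s, HasDerivAt u₄ (u₄' s) s)
    (hdec : ∀ s, U = u₁ s • T s + u₂ s • N s + c • B₁ s + u₄ s • B₂ s) :
    (∀ s, u₁' s = u₄ s ∧ u₂' s = -u₁ s - c * σ s ∧
      τ s * u₂ s = σ s * u₄ s ∧ u₄' s = c * τ s) ∧
    (∀ s, u₄ s = u₄ 0 + c * ∫ t in (0:ℝ)..s, τ t) ∧
    (∀ s, u₂ s = (σ s / τ s) * u₄ s) ∧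
    (∀ s, u₁ s = -(c * σ s) - deriv (fun r => (σ r / τ r) * u₄ r) s) ∧
    (∀ s, u₄ s / c +
      deriv (fun r => σ r + deriv (fun p => (σ p / τ p) * (u₄ p / c)) r) s = 0) := by
  have gexp : ∀ (v w₁ w₂ w₃ w₄ : Fin 4 → ℝ) (a b cc d : ℝ),
      g v (a • w₁ + b • w₂ + cc • w₃ + d • w₄)
        = a * g v w₁ + b * g v w₂ + cc * g v w₃ + d * g v w₄ := by
    intros; simp [g, Pi.add_apply, Pi.smul_apply, smul_eq_mul]; ring
  have gsymm : ∀ v w : Fin 4 → ℝ, g v w = g w v := by intros; simp [g]; ring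
  have key : ∀ s, (u₁' s - u₄ s) • T s + (u₁ s + u₂' s + c * σ s) • N s
      + (τ s * u₂ s - σ s * u₄ s) • B₁ s + (u₄' s - c * τ s) • B₂ s = 0 := by
    intro s
    have hF : HasDerivAt (fun r => u₁ r • T r + u₂ r • N r + c • B₁ r + u₄ r • B₂ r)
        ((u₁' s - u₄ s) • T s + (u₁ s + u₂' s + c * σ s) • N s
          + (τ s * u₂ s - σ s * u₄ s) • B₁ s + (u₄' s - c * τ s) • B₂ s) s := by
      have h1 := (hu₁ s).smul (hT s)
      have h2 := (hu₂ s).smul (hN s)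
      have h3 := (hasDerivAt_const s c).smul (hB₁ s)
      have h4 := (hu₄ s).smul (hB₂ s)
      have h := ((h1.add h2).add h3).add h4
      refine h.congr_deriv ?_
      funext i
      simp [Pi.add_apply, Pi.smul_apply, Pi.sub_apply, Pi.neg_apply, smul_eq_mul]
      ring
    have hF0 : HasDerivAt
        (fun r => u₁ r • T r + u₂ r • N r + c • B₁ r + u₄ r • B₂ r) 0 s := by
      have hconst : (fun r => u₁ r • T r + u₂ r • N r + c • B₁ r + u₄ r • B₂ r)
          = fun _ => U := by funext r; exact (hdec r).symm
      rw [hconst]; exact hasDerivAt_const s U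
    exact hF.unique hF0
  have e1 : ∀ s, u₁' s = u₄ s := by
    intro s
    have h := congrArg (g (T s)) (key s)
    rw [gexp] at h
    rw [hTT s, hTN s, hTB₁ s, hTB₂ s] at h
    simp [g] at h
    linarith
  have e4 : ∀ s, u₄' s = c * τ s := by
    intro s
    have h := congrArg (g (N s)) (key s)
    rw [gexp] at h
    rw [gsymm (N s) (T s), hTN s, hNN s, hNB₁ s, hNB₂ s] at h
    simp [g] at h
    linarith
  have e3 : ∀ s, τ s * u₂ s = σ s * u₄ s := by
    intro s
    have h := congrArg (g (B₁ s)) (key s)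
    rw [gexp] at h
    rw [gsymm (B₁ s) (T s), hTB₁ s, gsymm (B₁ s) (N s), hNB₁ s, hB₁B₁ s, hB₁B₂ s] at h
    simp [g] at h
    linarith
  have e2 : ∀ s, u₂' s = -u₁ s - c * σ s := by
    intro s
    have h := congrArg (g (B₂ s)) (key s)
    rw [gexp] at h
    rw [gsymm (B₂ s) (T s), hTB₂ s, gsymm (B₂ s) (N s), hNB₂ s,
      gsymm (B₂ s) (B₁ s), hB₁B₂ s, hB₂B₂ s] at h
    simp [g] at h
    linarith
  have h23 : ∀ s, u₂ s = σ s / τ s * u₄ s := by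
    intro s
    field_simp [hτ0 s]
    linear_combination e3 s
  refine ⟨fun s => ⟨e1 s, e2 s, e3 s, e4 s⟩, ?_, fun s => h23 s, ?_, ?_⟩
  · intro s
    have h := intervalIntegral.integral_eq_sub_of_hasDerivAt
      (f := u₄) (f' := fun t => c * τ t)
      (fun t _ => by simpa [e4 t] using hu₄ t)
      ((continuous_const.mul hτ.continuous).intervalIntegrable 0 s)
    rw [intervalIntegral.integral_const_mul] at h
    linarith
  · intro s
    have hfun : (fun r => σ r / τ r * u₄ r) = fun r => u₂ r :=
      funext fun r => (h23 r).symm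
    rw [hfun, (hu₂ s).deriv, e2 s]
    ring
  · intro s
    have hfun2 : (fun p => σ p / τ p * (u₄ p / c)) = fun p => u₂ p / c := by
      funext p; rw [h23 p]; ring
    have hfun3 : (fun r => σ r + deriv (fun p => σ p / τ p * (u₄ p / c)) r)
        = fun r => -u₁ r / c := by
      funext r
      rw [hfun2, ((hu₂ r).div_const c).deriv, e2 r]
      field_simp
      ring
    have hd : HasDerivAt (fun r => -u₁ r / c) (-u₁' s / c) s := ((hu₁ s).neg).div_const c
    rw [hfun3, hd.deriv, e1 s]
    field_simp
    ring
end

section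
/- Let T, N, B₁, B₂ : ℝ → ℝ⁴ be a Frenet frame of a pseudo null curve in E₁⁴ satisfying T' = N, N' = τB₁, B₁' = σN − τB₂, B₂' = −T − σB₁, with σ, τ smooth, τ nowhere zero, and suppose the condition ∫₀ˢ τ dt + d/ds[σ + d/ds((σ/τ)∫₀ˢ τ dt)] = 0 holds for all s. Then the vector field U(s) = −[σ + d/ds((σ/τ)∫₀ˢ τ dt)]·T + ((σ/τ)∫₀ˢ τ dt)·N + B₁ + (∫₀ˢ τ dt)·B₂ is constant and satisfies g(B₁, U) = 1, so the curve is a 2-type slant helix. -/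
theorem stmt13
    (T N B₁ B₂ : ℝ → Fin 4 → ℝ) (σ τ : ℝ → ℝ)
    (hσ : ContDiff ℝ (⊤ : ℕ∞) σ) (hτ : ContDiff ℝ (⊤ : ℕ∞) τ)
    (hτ0 : ∀ s, τ s ≠ 0)
    (hT : ∀ s, HasDerivAt T (N s) s)
    (hN : ∀ s, HasDerivAt N (τ s • B₁ s) s)
    (hB₁ : ∀ s, HasDerivAt B₁ (σ s • N s - τ s • B₂ s) s)
    (hB₂ : ∀ s, HasDerivAt B₂ (-T s - σ s • B₁ s) s)
    (hTT : ∀ s, g (T s) (T s) = 1) (hB₁B₁ : ∀ s, g (B₁ s) (B₁ s) = 1)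
    (hNN : ∀ s, g (N s) (N s) = 0) (hB₂B₂ : ∀ s, g (B₂ s) (B₂ s) = 0)
    (hNB₂ : ∀ s, g (N s) (B₂ s) = 1)
    (hTN : ∀ s, g (T s) (N s) = 0) (hTB₁ : ∀ s, g (T s) (B₁ s) = 0)
    (hTB₂ : ∀ s, g (T s) (B₂ s) = 0) (hNB₁ : ∀ s, g (N s) (B₁ s) = 0)
    (hB₁B₂ : ∀ s, g (B₁ s) (B₂ s) = 0)
    (hcond : ∀ s, (∫ t in (0:ℝ)..s, τ t) +
      deriv (fun r => σ r +
        deriv (fun p => (σ p / τ p) * ∫ t in (0:ℝ)..p, τ t) r) s = 0) :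
    (∀ s, HasDerivAt (fun r =>
      (-(σ r + deriv (fun p => (σ p / τ p) * ∫ t in (0:ℝ)..p, τ t) r)) • T r +
      ((σ r / τ r) * ∫ t in (0:ℝ)..r, τ t) • N r + B₁ r +
      (∫ t in (0:ℝ)..r, τ t) • B₂ r) (0 : Fin 4 → ℝ) s) ∧
    (∀ s, g (B₁ s)
      ((-(σ s + deriv (fun p => (σ p / τ p) * ∫ t in (0:ℝ)..p, τ t) s)) • T s +
      ((σ s / τ s) * ∫ t in (0:ℝ)..s, τ t) • N s + B₁ s +
      (∫ t in (0:ℝ)..s, τ t) • B₂ s) = 1) := by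
  set Iτ : ℝ → ℝ := fun s => ∫ t in (0:ℝ)..s, τ t with hIτdef
  have hIτ : ∀ s, HasDerivAt Iτ (τ s) s := fun s =>
    (hτ.continuous.integral_hasStrictDerivAt 0 s).hasDerivAt
  have hIτc : ContDiff ℝ (⊤ : ℕ∞) Iτ := by
    refine contDiff_infty_iff_deriv.mpr ⟨fun s => (hIτ s).differentiableAt, ?_⟩
    have : deriv Iτ = τ := funext fun s => (hIτ s).deriv
    rw [this]; exact hτ.of_le (by simp)
  set A : ℝ → ℝ := fun p => (σ p / τ p) * Iτ p with hAdef
  have hAc : ContDiff ℝ (⊤ : ℕ∞) A := ((hσ.of_le (by simp)).div (hτ.of_le (by simp)) hτ0).mul hIτc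
  have hA'c : ContDiff ℝ (⊤ : ℕ∞) (deriv A) := (contDiff_infty_iff_deriv.mp hAc).2
  set F : ℝ → ℝ := fun r => σ r + deriv A r with hFdef
  have hFc : ContDiff ℝ (⊤ : ℕ∞) F := (hσ.of_le (by simp)).add hA'c
  have hF : ∀ s, HasDerivAt F (-(Iτ s)) s := by
    intro s
    have h := (hFc.differentiable (by simp) s).hasDerivAt
    have := hcond s
    rw [show deriv (fun r => σ r + deriv (fun p => (σ p / τ p) * ∫ t in (0:ℝ)..p, τ t) r) s
        = deriv F s from rfl] at this
    rwa [show deriv F s = -(Iτ s) by linarith] at h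
  constructor
  · intro s
    have hA : HasDerivAt A (deriv A s) s := (hAc.differentiable (by simp) s).hasDerivAt
    have hU := ((((hF s).neg.smul (hT s)).add (hA.smul (hN s))).add (hB₁ s)).add
      ((hIτ s).smul (hB₂ s))
    have hAv : A s * τ s = σ s * Iτ s := by
      simp only [hAdef]
      field_simp
      have hτs := hτ0 s; field_simp
    refine hU.congr_deriv (Eq.symm ?_)
    funext i
    simp only [Pi.add_apply, Pi.smul_apply, Pi.sub_apply, Pi.neg_apply, Pi.zero_apply,
      smul_eq_mul, hFdef]
    linear_combination (-(B₁ s i)) * hAv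
  · intro s
    have h1 := hTB₁ s; have h2 := hNB₁ s; have h3 := hB₁B₁ s; have h4 := hB₁B₂ s
    simp only [g] at h1 h2 h3 h4 ⊢
    simp only [Pi.add_apply, Pi.smul_apply, smul_eq_mul]
    linear_combination (-(σ s + deriv (fun p => (σ p / τ p) * ∫ t in (0:ℝ)..p, τ t) s)) * h1 +
      ((σ s / τ s) * Iτ s) * h2 + h3 + (Iτ s) * h4
end

section
/- Let T, N, B₁, B₂ : ℝ → ℝ⁴ be a Frenet frame of a pseudo null curve in E₁⁴ satisfying T' = N, N' = τB₁, B₁' = σN − τB₂, B₂' = −T − σB₁, with σ, τ smooth, τ nowhere zero, and suppose σ = cτ for a negative constant c (so the curve lies in a pseudohyperbolic space ℍ₀³). Then there is no nonzero constant vector U with g(N(s), U) equal to a nonzero constant; i.e., there are no 1-type pseudo null slant helices in ℍ₀³. -/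
lemma g_hasDerivAt {F : ℝ → Fin 4 → ℝ} {F' : Fin 4 → ℝ} {U : Fin 4 → ℝ} {s : ℝ}
    (h : HasDerivAt F F' s) : HasDerivAt (fun t => g (F t) U) (g F' U) s := by
  have h' := hasDerivAt_pi.mp h
  unfold g
  exact ((((h' 0).mul_const (U 0)).neg.add ((h' 1).mul_const (U 1))).add
    ((h' 2).mul_const (U 2))).add ((h' 3).mul_const (U 3))

theorem stmt14
    (T N B₁ B₂ : ℝ → Fin 4 → ℝ) (σ τ : ℝ → ℝ)
    (hσ : ContDiff ℝ (⊤ : ℕ∞) σ) (hτ : ContDiff ℝ (⊤ : ℕ∞) τ)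
    (hτ0 : ∀ s, τ s ≠ 0)
    (hT : ∀ s, HasDerivAt T (N s) s)
    (hN : ∀ s, HasDerivAt N (τ s • B₁ s) s)
    (hB₁ : ∀ s, HasDerivAt B₁ (σ s • N s - τ s • B₂ s) s)
    (hB₂ : ∀ s, HasDerivAt B₂ (-T s - σ s • B₁ s) s)
    (hTT : ∀ s, g (T s) (T s) = 1) (hB₁B₁ : ∀ s, g (B₁ s) (B₁ s) = 1)
    (hNN : ∀ s, g (N s) (N s) = 0) (hB₂B₂ : ∀ s, g (B₂ s) (B₂ s) = 0)
    (hNB₂ : ∀ s, g (N s) (B₂ s) = 1)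
    (hTN : ∀ s, g (T s) (N s) = 0) (hTB₁ : ∀ s, g (T s) (B₁ s) = 0)
    (hTB₂ : ∀ s, g (T s) (B₂ s) = 0) (hNB₁ : ∀ s, g (N s) (B₁ s) = 0)
    (hB₁B₂ : ∀ s, g (B₁ s) (B₂ s) = 0)
    (c : ℝ) (hcneg : c < 0) (hσc : ∀ s, σ s = c * τ s) :
    ¬ ∃ U : Fin 4 → ℝ, U ≠ 0 ∧ ∃ c₁ : ℝ, c₁ ≠ 0 ∧ ∀ s, g (N s) U = c₁ := by
  rintro ⟨U, hU0, c₁, hc₁, hc⟩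
  -- step 1 : g (B₁ s) U = 0
  have h1 : ∀ s, g (B₁ s) U = 0 := by
    intro s
    have hd := g_hasDerivAt (U := U) (hN s)
    have hconst : HasDerivAt (fun t => g (N t) U) 0 s := by
      have : (fun t => g (N t) U) = fun _ => c₁ := funext fun t => hc t
      rw [this]; exact hasDerivAt_const s c₁
    have h0 : g (τ s • B₁ s) U = 0 := hd.unique hconst
    have hsc : g (τ s • B₁ s) U = τ s * g (B₁ s) U := by
      simp [g, Pi.smul_apply, smul_eq_mul]; ring
    rw [hsc] at h0
    exact (mul_eq_zero.mp h0).resolve_left (hτ0 s)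
  -- step 2 : g (B₂ s) U = c * c₁
  have h2 : ∀ s, g (B₂ s) U = c * c₁ := by
    intro s
    have hd := g_hasDerivAt (U := U) (hB₁ s)
    have hconst : HasDerivAt (fun t => g (B₁ t) U) 0 s := by
      have : (fun t => g (B₁ t) U) = fun _ => (0 : ℝ) := funext fun t => h1 t
      rw [this]; exact hasDerivAt_const s 0
    have h0 : g (σ s • N s - τ s • B₂ s) U = 0 := hd.unique hconst
    have hsc : g (σ s • N s - τ s • B₂ s) U = σ s * g (N s) U - τ s * g (B₂ s) U := by
      simp [g, Pi.smul_apply, Pi.sub_apply, smul_eq_mul]; ring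
    rw [hsc, hc s, hσc s] at h0
    exact mul_left_cancel₀ (hτ0 s) (by linear_combination -h0)
  -- step 3 : g (T s) U = 0
  have h3 : ∀ s, g (T s) U = 0 := by
    intro s
    have hd := g_hasDerivAt (U := U) (hB₂ s)
    have hconst : HasDerivAt (fun t => g (B₂ t) U) 0 s := by
      have : (fun t => g (B₂ t) U) = fun _ => c * c₁ := funext fun t => h2 t
      rw [this]; exact hasDerivAt_const s (c * c₁)
    have h0 : g (-T s - σ s • B₁ s) U = 0 := hd.unique hconst
    have hsc : g (-T s - σ s • B₁ s) U = -g (T s) U - σ s * g (B₁ s) U := by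
      simp [g, Pi.smul_apply, Pi.sub_apply, Pi.neg_apply, smul_eq_mul]; ring
    rw [hsc, h1 s] at h0
    linarith
  -- step 4 : c₁ = 0, contradiction
  have hd := g_hasDerivAt (U := U) (hT 0)
  have hconst : HasDerivAt (fun t => g (T t) U) 0 0 := by
    have : (fun t => g (T t) U) = fun _ => (0 : ℝ) := funext fun t => h3 t
    rw [this]; exact hasDerivAt_const 0 0
  have h0 : g (N 0) U = 0 := hd.unique hconst
  rw [hc 0] at h0
  exact hc₁ h0
end

section
/- Let σ, τ : ℝ → ℝ be smooth with τ nowhere zero and σ = cτ for a negative constant c, and suppose the 2-type slant helix condition ∫₀ˢ τ dt + d/ds[σ + d/ds((σ/τ)∫₀ˢ τ dt)] = 0 holds for all s. Then τ satisfies the ODE 2cτ'' + τ = 0, and hence τ(s) = λ·exp(s/√(−2c)) + μ·exp(−s/√(−2c)) for some constants λ, μ ∈ ℝ. -/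
theorem stmt15 (σ τ : ℝ → ℝ) (hτsm : ContDiff ℝ (⊤ : ℕ∞) τ)
    (hτ0 : ∀ s, τ s ≠ 0) (c : ℝ) (hcneg : c < 0) (hσc : ∀ s, σ s = c * τ s)
    (hcond : ∀ s, (∫ t in (0:ℝ)..s, τ t) +
      deriv (fun r => σ r +
        deriv (fun p => (σ p / τ p) * ∫ t in (0:ℝ)..p, τ t) r) s = 0) :
    (∀ s, 2 * c * deriv (deriv τ) s + τ s = 0) ∧
    (∃ l m : ℝ, ∀ s, τ s = l * Real.exp (s / Real.sqrt (-(2 * c))) +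
      m * Real.exp (-(s / Real.sqrt (-(2 * c))))) := by
  have hc : c ≠ 0 := ne_of_lt hcneg
  have hτc : Continuous τ := hτsm.continuous
  set F : ℝ → ℝ := fun s => ∫ t in (0:ℝ)..s, τ t with hFdef
  have hFd : ∀ s, HasDerivAt F (τ s) s := fun s =>
    intervalIntegral.integral_hasDerivAt_right (hτc.intervalIntegrable 0 s)
      (hτc.stronglyMeasurableAtFilter _ _) hτc.continuousAt
  -- simplify the inner derivative
  have hinner : (fun p => (σ p / τ p) * ∫ t in (0:ℝ)..p, τ t) = fun p => c * F p := by
    funext p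
    rw [hσc p, mul_div_assoc, div_self (hτ0 p), mul_one]
  have h1 : ∀ r, deriv (fun p => (σ p / τ p) * ∫ t in (0:ℝ)..p, τ t) r = c * τ r := by
    intro r
    rw [hinner]
    exact ((hFd r).const_mul c).deriv
  have houter : (fun r => σ r +
      deriv (fun p => (σ p / τ p) * ∫ t in (0:ℝ)..p, τ t) r) = fun r => 2 * c * τ r := by
    funext r
    rw [h1 r, hσc r]; ring
  have hτdiff : Differentiable ℝ τ := hτsm.differentiable (by simp)
  have hcond' : ∀ s, F s + 2 * c * deriv τ s = 0 := by
    intro s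
    have := hcond s
    rw [houter] at this
    rwa [deriv_const_mul _ (hτdiff s)] at this
  have hdτ : ∀ s, deriv τ s = -F s / (2 * c) := by
    intro s
    have := hcond' s
    field_simp
    linarith
  have hτhd : ∀ s, HasDerivAt τ (-F s / (2 * c)) s := by
    intro s
    have := (hτdiff s).hasDerivAt
    rwa [hdτ s] at this
  have hpart1 : ∀ s, 2 * c * deriv (deriv τ) s + τ s = 0 := by
    intro s
    have hder : deriv τ = fun s => -F s / (2 * c) := funext hdτ
    have : deriv (deriv τ) s = -τ s / (2 * c) := by
      rw [hder]
      exact ((hFd s).neg.div_const (2 * c)).deriv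
    rw [this]
    field_simp
    ring
  refine ⟨hpart1, ?_⟩
  set k : ℝ := Real.sqrt (-(2 * c)) with hkdef
  have hk0 : 0 < k := Real.sqrt_pos.mpr (by linarith)
  have hkne : k ≠ 0 := ne_of_gt hk0
  have hkk : k * k = -(2 * c) := Real.mul_self_sqrt (by linarith)
  set w : ℝ → ℝ := fun s => τ s + F s / k with hwdef
  set u : ℝ → ℝ := fun s => τ s - F s / k with hudef
  have hw : ∀ s, HasDerivAt w ((1 / k) * w s) s := by
    intro s
    have h := (hτhd s).add ((hFd s).div_const k)
    refine h.congr_deriv ?_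
    have h2c : (2 : ℝ) * c = -(k * k) := by linarith
    simp only [hwdef]
    rw [h2c]
    field_simp
    ring
  have hu : ∀ s, HasDerivAt u (-(1 / k) * u s) s := by
    intro s
    have h := (hτhd s).sub ((hFd s).div_const k)
    refine h.congr_deriv ?_
    have h2c : (2 : ℝ) * c = -(k * k) := by linarith
    simp only [hudef]
    rw [h2c]
    field_simp
    ring
  have hF0 : F 0 = 0 := intervalIntegral.integral_same
  have hw0 : w 0 = τ 0 := by simp [hwdef, hF0]
  have hu0 : u 0 = τ 0 := by simp [hudef, hF0]
  -- w s = τ 0 * exp (s / k)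
  have hwconst : ∀ s, w s * Real.exp (-(s / k)) = τ 0 := by
    have hv : ∀ s, HasDerivAt (fun s => w s * Real.exp (-(s / k))) 0 s := by
      intro s
      have he : HasDerivAt (fun s : ℝ => Real.exp (-(s / k)))
          (Real.exp (-(s / k)) * -(1 / k)) s := by
        exact (((hasDerivAt_id s).div_const k).neg).exp
      have := (hw s).mul he
      refine this.congr_deriv ?_
      ring
    intro s
    have := is_const_of_deriv_eq_zero (fun x => (hv x).differentiableAt)
      (fun x => (hv x).deriv) s 0
    simpa [hw0] using this
  have huconst : ∀ s, u s * Real.exp (s / k) = τ 0 := by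
    have hv : ∀ s, HasDerivAt (fun s => u s * Real.exp (s / k)) 0 s := by
      intro s
      have he : HasDerivAt (fun s : ℝ => Real.exp (s / k))
          (Real.exp (s / k) * (1 / k)) s := ((hasDerivAt_id s).div_const k).exp
      have := (hu s).mul he
      refine this.congr_deriv ?_
      ring
    intro s
    have := is_const_of_deriv_eq_zero (fun x => (hv x).differentiableAt)
      (fun x => (hv x).deriv) s 0
    simpa [hu0] using this
  refine ⟨τ 0 / 2, τ 0 / 2, fun s => ?_⟩
  have hexp1 : Real.exp (-(s / k)) * Real.exp (s / k) = 1 := by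
    rw [← Real.exp_add]; simp
  have hwsol : w s = τ 0 * Real.exp (s / k) :=
    calc w s = w s * (Real.exp (-(s / k)) * Real.exp (s / k)) := by rw [hexp1]; ring
      _ = τ 0 * Real.exp (s / k) := by rw [← mul_assoc, hwconst s]
  have husol : u s = τ 0 * Real.exp (-(s / k)) :=
    calc u s = u s * (Real.exp (s / k) * Real.exp (-(s / k))) := by
          rw [mul_comm (Real.exp (s / k)), hexp1]; ring
      _ = τ 0 * Real.exp (-(s / k)) := by rw [← mul_assoc, huconst s]
  have hτs : τ s = (w s + u s) / 2 := by
    simp only [hwdef, hudef]; ring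
  rw [hτs, hwsol, husol]; ring
end

section
/- Let T, N, B₁, B₂ : ℝ → ℝ⁴ be a Frenet frame of a partially null curve in E₁⁴ with Frenet equations T' = κN, N' = −κT + τB₁, B₁' = 0, B₂' = −τN (κ, τ smooth, nowhere zero), and suppose U is a constant vector with g(B₁, U) = c for a nonzero constant c. Writing u₁ = g(T,U) and θ(s) = ∫₀ˢ κ(t)dt, the function v(θ) = u₁(s(θ)) satisfies v'' + v = c·(τ/κ)(θ) in the variable θ. -/
lemma gU_deriv {f : ℝ → Fin 4 → ℝ} {f' U : Fin 4 → ℝ} {s : ℝ}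
    (h : HasDerivAt f f' s) :
    HasDerivAt (fun s => g (f s) U) (g f' U) s := by
  have h' := hasDerivAt_pi.mp h
  exact ((((h' 0).mul_const (U 0)).neg.add ((h' 1).mul_const (U 1))).add
    ((h' 2).mul_const (U 2))).add ((h' 3).mul_const (U 3))

lemma strictMono_surj_continuous {f : ℝ → ℝ} (hm : StrictMono f)
    (hs : Function.Surjective f) : Continuous f := by
  have := (StrictMono.orderIsoOfSurjective f hm hs).toHomeomorph.continuous
  rwa [show ⇑(StrictMono.orderIsoOfSurjective f hm hs).toHomeomorph = f from rfl] at this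

theorem stmt17
    (T N B₁ B₂ : ℝ → Fin 4 → ℝ) (κ τ : ℝ → ℝ)
    (hκ : ContDiff ℝ (⊤ : ℕ∞) κ) (hτ : ContDiff ℝ (⊤ : ℕ∞) τ)
    (hκ0 : ∀ s, κ s ≠ 0) (hτ0 : ∀ s, τ s ≠ 0)
    (hT : ∀ s, HasDerivAt T (κ s • N s) s)
    (hN : ∀ s, HasDerivAt N ((-κ s) • T s + τ s • B₁ s) s)
    (hB₁ : ∀ s, HasDerivAt B₁ (0 : Fin 4 → ℝ) s)
    (hB₂ : ∀ s, HasDerivAt B₂ ((-τ s) • N s) s)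
    (hTT : ∀ s, g (T s) (T s) = 1) (hNN : ∀ s, g (N s) (N s) = 1)
    (hB₁B₁ : ∀ s, g (B₁ s) (B₁ s) = 0) (hB₂B₂ : ∀ s, g (B₂ s) (B₂ s) = 0)
    (hB₁B₂ : ∀ s, g (B₁ s) (B₂ s) = 1)
    (hTN : ∀ s, g (T s) (N s) = 0) (hTB₁ : ∀ s, g (T s) (B₁ s) = 0)
    (hTB₂ : ∀ s, g (T s) (B₂ s) = 0) (hNB₁ : ∀ s, g (N s) (B₁ s) = 0)
    (hNB₂ : ∀ s, g (N s) (B₂ s) = 0)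
    (U : Fin 4 → ℝ) (c : ℝ) (hc : c ≠ 0)
    (hU : ∀ s, g (B₁ s) U = c)
    (ψ : ℝ → ℝ)
    (hψ₁ : ∀ x, (∫ t in (0:ℝ)..(ψ x), κ t) = x)
    (hψ₂ : ∀ s, ψ (∫ t in (0:ℝ)..s, κ t) = s) :
    ∀ x, deriv (deriv (fun y => g (T (ψ y)) U)) x + g (T (ψ x)) U =
      c * (τ (ψ x) / κ (ψ x)) := by
  have hκc : Continuous κ := hκ.continuous
  set θ : ℝ → ℝ := fun s => ∫ t in (0:ℝ)..s, κ t with hθdef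
  have hθ : ∀ s, HasDerivAt θ (κ s) s := fun s =>
    intervalIntegral.integral_hasDerivAt_right (hκc.intervalIntegrable _ _)
      hκc.aestronglyMeasurable.stronglyMeasurableAtFilter hκc.continuousAt
  -- κ has constant sign
  have hsign : (∀ s, 0 < κ s) ∨ (∀ s, κ s < 0) := by
    rcases lt_or_gt_of_ne (hκ0 0) with h0 | h0
    · right
      intro s
      by_contra hle
      have hs : 0 < κ s := lt_of_le_of_ne (not_lt.mp hle) (Ne.symm (hκ0 s))
      have := intermediate_value_uIcc (a := 0) (b := s) hκc.continuousOn
      have h0mem : (0:ℝ) ∈ Set.uIcc (κ 0) (κ s) := Set.mem_uIcc.mpr (Or.inl ⟨le_of_lt h0, le_of_lt hs⟩)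
      obtain ⟨t, _, ht⟩ := this h0mem
      exact hκ0 t ht
    · left
      intro s
      by_contra hle
      have hs : κ s < 0 := lt_of_le_of_ne (not_lt.mp hle) (hκ0 s)
      have := intermediate_value_uIcc (a := 0) (b := s) hκc.continuousOn
      have h0mem : (0:ℝ) ∈ Set.uIcc (κ 0) (κ s) := Set.mem_uIcc.mpr (Or.inr ⟨le_of_lt hs, le_of_lt h0⟩)
      obtain ⟨t, _, ht⟩ := this h0mem
      exact hκ0 t ht
  have hψsurj : Function.Surjective ψ := fun s => ⟨θ s, hψ₂ s⟩
  -- ψ is continuous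
  have hψcont : Continuous ψ := by
    rcases hsign with hpos | hneg
    · have hθmono : StrictMono θ := strictMono_of_deriv_pos fun x => by
        rw [(hθ x).deriv]; exact hpos x
      have hψmono : StrictMono ψ := by
        intro x y hxy
        rcases lt_trichotomy (ψ x) (ψ y) with h | h | h
        · exact h
        · exact absurd (by rw [← hψ₁ x, ← hψ₁ y, h]) (ne_of_lt hxy)
        · exact absurd (by rw [← hψ₁ x, ← hψ₁ y]; exact hθmono h) (not_lt.mpr (le_of_lt hxy))
      exact strictMono_surj_continuous hψmono hψsurj
    · have hθmono : StrictMono (fun s => -θ s) := strictMono_of_deriv_pos fun x => by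
        rw [show deriv (fun s => -θ s) x = -κ x from (((hθ x)).neg).deriv]; linarith [hneg x]
      have hψmono : StrictMono (fun x => ψ (-x)) := by
        intro x y hxy
        rcases lt_trichotomy (ψ (-x)) (ψ (-y)) with h | h | h
        · exact h
        · exfalso
          have hψ₁' : ∀ z, θ (ψ z) = z := hψ₁
          have := congrArg Neg.neg (by rw [← hψ₁' (-x), ← hψ₁' (-y), h] : (-x : ℝ) = -y)
          simp at this; exact ne_of_lt hxy this
        · exfalso
          have hψ₁' : ∀ z, θ (ψ z) = z := hψ₁
          have h3 : -θ (ψ (-y)) < -θ (ψ (-x)) := hθmono h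
          rw [hψ₁' (-x), hψ₁' (-y)] at h3
          simp at h3; linarith
      have hc2 : Continuous fun x => ψ (-x) :=
        strictMono_surj_continuous hψmono (fun s => by
          obtain ⟨x, hx⟩ := hψsurj s; exact ⟨-x, by simpa using hx⟩)
      have : Continuous fun x => ψ (- -x) := hc2.comp continuous_neg
      simpa using this
  -- ψ has derivative (κ (ψ x))⁻¹
  have hψd : ∀ x, HasDerivAt ψ (κ (ψ x))⁻¹ x := fun x =>
    HasDerivAt.of_local_left_inverse hψcont.continuousAt (hθ (ψ x)) (hκ0 (ψ x))
      (Filter.Eventually.of_forall hψ₁)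
  -- first derivative
  have hv1 : ∀ x, HasDerivAt (fun y => g (T (ψ y)) U) (g (N (ψ x)) U) x := by
    intro x
    have h := (gU_deriv (U := U) (hT (ψ x))).comp x (hψd x)
    have heq : g (κ (ψ x) • N (ψ x)) U * (κ (ψ x))⁻¹ = g (N (ψ x)) U := by
      simp only [g, Pi.smul_apply, smul_eq_mul]
      field_simp [hκ0 (ψ x)]
    rwa [heq] at h
  have hd1 : deriv (fun y => g (T (ψ y)) U) = fun x => g (N (ψ x)) U :=
    funext fun x => (hv1 x).deriv
  intro x
  have h2 := (gU_deriv (U := U) (hN (ψ x))).comp x (hψd x)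
  have heq2 : g ((-κ (ψ x)) • T (ψ x) + τ (ψ x) • B₁ (ψ x)) U * (κ (ψ x))⁻¹
      = -(g (T (ψ x)) U) + c * (τ (ψ x) / κ (ψ x)) := by
    have hlin : g ((-κ (ψ x)) • T (ψ x) + τ (ψ x) • B₁ (ψ x)) U
        = -κ (ψ x) * g (T (ψ x)) U + τ (ψ x) * g (B₁ (ψ x)) U := by
      simp only [g, Pi.add_apply, Pi.smul_apply, smul_eq_mul]; ring
    rw [hlin, hU (ψ x)]
    field_simp [hκ0 (ψ x)]
  rw [heq2] at h2
  have h2' : HasDerivAt (fun y => g (N (ψ y)) U)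
      (-(g (T (ψ x)) U) + c * (τ (ψ x) / κ (ψ x))) x := h2
  rw [hd1, h2'.deriv]
  ring
end
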